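/- Subcriticality implies finiteness of low-degree non-vanishing trees: Let F = (F^𝔩_𝔱)_{𝔱∈𝔏₊,𝔩∈𝔏₋⊔{𝟎}} with every F^𝔩_𝔱 ∈ 𝒫, and suppose that F obeys reg. Then for every γ ∈ ℝ and every 𝔱 ∈ 𝔏₊, the set {τ ∈ T̊ : τ is 𝔱-non-vanishing for F and |τ|_𝔰 < γ} is finite. -/

import Mathlib

/-
Common framework: multi-indices, the algebra of smooth functions on ℝ^𝒪,
and the spaces of decorated trees 𝒱 and 𝔅 of [Bruned–Chandra–Chevyrev–Hairer,
"Renormalising SPDEs in regularity structures"], presented abstractly together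
with the defining recursions of the various operators on them.
-/

open scoped BigOperators Classical

namespace SPDERenorm

/-! ### Multi-indices in `ℕ^{d+1}` -/

abbrev MIdx (d : ℕ) := Fin (d+1) → ℕ

/-- `k! = ∏ᵢ k[i]!`. -/
def mfact {d : ℕ} (k : MIdx d) : ℕ := ∏ i, Nat.factorial (k i)

/-- `C(k,ℓ) = ∏ᵢ binom(k[i], ℓ[i])`. -/
def mchoose {d : ℕ} (k l : MIdx d) : ℕ := ∏ i, Nat.choose (k i) (l i)

/-- `|k| = Σᵢ k[i]`. -/
def msize {d : ℕ} (k : MIdx d) : ℕ := ∑ i, k i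

/-- The unit multi-index `e_i`. -/
def munit {d : ℕ} (i : Fin (d+1)) : MIdx d := Pi.single i 1

/-- Sum of `f ℓ` over all multi-indices `ℓ ≤ m` (componentwise). -/
noncomputable def msum {d : ℕ} {A : Type*} [AddCommMonoid A] (m : MIdx d) (f : MIdx d → A) : A :=
  ∑ e : (∀ i : Fin (d+1), Fin (m i + 1)), f fun i => (e i : ℕ)

/-- The scaled size `|k|_𝔰 = Σᵢ k[i]·𝔰ᵢ`. -/
noncomputable def wdeg {d : ℕ} (s : Fin (d+1) → ℝ) (k : MIdx d) : ℝ := ∑ i, (k i : ℝ) * s i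

/-- The index set `𝒪 = 𝔏₊ × ℕ^{d+1}`. -/
abbrev Odx (Lp : Type) (d : ℕ) := Lp × MIdx d

/-! ### Functions on `ℝ^𝒪` and differential operators -/

/-- Real-valued functions on `ℝ^𝒪`. -/
abbrev FnO (Lp : Type) (d : ℕ) := (Odx Lp d → ℝ) → ℝ

/-- The coordinate function `𝒳_o`. -/
def Xc {Lp : Type} {d : ℕ} (o : Odx Lp d) : FnO Lp d := fun x => x o

/-- The partial derivative `D_o` in the `o`-th coordinate. -/
noncomputable def Dpart {Lp : Type} {d : ℕ} [DecidableEq Lp] (o : Odx Lp d) (F : FnO Lp d) :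
    FnO Lp d :=
  fun x => deriv (fun t : ℝ => F (Function.update x o t)) (x o)

/-- Iterated partial derivatives `D_{o₁} ∘ ⋯ ∘ D_{oₙ}` over a list. -/
noncomputable def Dlist {Lp : Type} {d : ℕ} [DecidableEq Lp] (L : List (Odx Lp d))
    (F : FnO Lp d) : FnO Lp d :=
  L.foldr Dpart F

/-- The derivation `∂_i F = Σ_{(𝔱,p)} 𝒳_{(𝔱,p+e_i)} · D_{(𝔱,p)} F`. -/
noncomputable def pderivO {Lp : Type} {d : ℕ} [DecidableEq Lp] (i : Fin (d+1)) (F : FnO Lp d) :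
    FnO Lp d :=
  fun x => ∑ᶠ o : Odx Lp d, Xc (o.1, o.2 + munit i) x * Dpart o F x

/-- `∂^k = ∏ᵢ ∂ᵢ^{k[i]}`. -/
noncomputable def mpderiv {Lp : Type} {d : ℕ} [DecidableEq Lp] (k : MIdx d) (F : FnO Lp d) :
    FnO Lp d :=
  (List.finRange (d+1)).foldr (fun i G => (pderivO i)^[k i] G) F

/-- `D^α` for a finitely supported `α ∈ ℕ^𝒪`. -/
noncomputable def Dexp {Lp : Type} {d : ℕ} [DecidableEq Lp] (α : Odx Lp d →₀ ℕ)
    (F : FnO Lp d) : FnO Lp d :=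
  Dlist (Finsupp.toMultiset α).toList F

/-- `α! = ∏_o α[o]!`. -/
def afact {Lp : Type} {d : ℕ} (α : Odx Lp d →₀ ℕ) : ℕ := α.prod fun _ n => Nat.factorial n

/-- The monomial `𝒳^α`. -/
noncomputable def Xpow {Lp : Type} {d : ℕ} (α : Odx Lp d →₀ ℕ) : FnO Lp d :=
  fun x => α.prod fun o n => x o ^ n

/-- `F` depends only on the coordinates in `s`. -/
def DependsOnlyOn {Lp : Type} {d : ℕ} (F : FnO Lp d) (s : Set (Odx Lp d)) : Prop :=
  ∀ x y, (∀ o ∈ s, x o = y o) → F x = F y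

/-- Membership in `𝒞_𝒪`: smooth functions depending on finitely many coordinates. -/
def IsSmoothCO {Lp : Type} {d : ℕ} (F : FnO Lp d) : Prop :=
  ∃ (s : Finset (Odx Lp d)) (g : (↥s → ℝ) → ℝ),
    ContDiff ℝ (⊤ : ℕ∞) g ∧ ∀ x, F x = g fun o => x o.1

/-- Membership in `𝒫 ⊆ 𝒞_𝒪` (relative to the partition `𝒪 = 𝒪₊ ⊔ 𝒪₋`). -/
def IsP {Lp : Type} {d : ℕ} (Om Op : Set (Odx Lp d)) (F : FnO Lp d) : Prop :=
  ∃ (m : ℕ) (α : Fin m → (Odx Lp d →₀ ℕ)) (G : Fin m → FnO Lp d),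
    Function.Injective α ∧
    (∀ j, ∀ o ∈ (α j).support, o ∈ Om) ∧
    (∀ j, IsSmoothCO (G j)) ∧
    (∀ j, G j ≠ 0) ∧
    (∀ j, DependsOnlyOn (G j) Op) ∧
    F = fun x => ∑ j, G j x * Xpow (α j) x

/-- `F` is a real polynomial in finitely many of the coordinate functions. -/
def IsPolyFn {Lp : Type} {d : ℕ} (F : FnO Lp d) : Prop :=
  ∃ (s : Finset (Odx Lp d)) (P : MvPolynomial (↥s) ℝ),
    ∀ x, F x = MvPolynomial.eval (fun o => x o.1) P

/-! ### The trees of `𝒱` -/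

/-- The set `𝒱` of decorated rooted trees, presented abstractly: a tree is uniquely
built from a root decoration `(𝔩,k) ∈ 𝔇 × ℕ^{d+1}` and a multiset of decorated branches,
and every tree arises this way (induction). -/
structure TreeV (Lp Dr : Type) (d : ℕ) where
  V : Type
  node : Dr → MIdx d → Multiset (Odx Lp d × V) → V
  node_bij : Function.Bijective
    (fun x : Dr × MIdx d × Multiset (Odx Lp d × V) => node x.1 x.2.1 x.2.2)
  ind : ∀ P : V → Prop,
    (∀ l k (M : Multiset (Odx Lp d × V)), (∀ x ∈ M, P x.2) → P (node l k M)) → ∀ τ, P τ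

namespace TreeV

variable {Lp Dr : Type} {d : ℕ} (S : TreeV Lp Dr d)

/-- Rebuild a tree after replacing the `j`-th branch by a linear combination of trees. -/
noncomputable def replace (l : Dr) (k : MIdx d) (L : List (Odx Lp d × S.V))
    (j : Fin L.length) (w : S.V →₀ ℝ) : S.V →₀ ℝ :=
  w.sum fun τ' c => Finsupp.single (S.node l k (↑(L.set j ((L.get j).1, τ')))) c

/-- Decomposition of a tree into its root decoration and branches. -/
noncomputable def dec : S.V ≃ Dr × MIdx d × Multiset (Odx Lp d × S.V) :=
  (Equiv.ofBijective _ S.node_bij).symm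

/-- The polynomial decoration at the root. -/
noncomputable def polyOf (τ : S.V) : MIdx d := (S.dec τ).2.1

/-- The multiset of branches at the root. -/
noncomputable def branchesOf (τ : S.V) : Multiset (Odx Lp d × S.V) := (S.dec τ).2.2

/-- The commutative tree product merging the roots of `g 0, …, g (n-1)`
(adding the polynomial decorations), the merged root receiving the driver label `l`. -/
noncomputable def merge (l : Dr) {n : ℕ} (g : Fin n → S.V) : S.V :=
  S.node l (∑ r, S.polyOf (g r)) (∑ r, S.branchesOf (g r))

/-- Defining recursion of the grafting operators `⋖̂_o : 𝕍 ⊗ 𝕍 → 𝕍`. -/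
def GraftSpec [DecidableEq Lp] (graft : Odx Lp d → S.V → S.V → (S.V →₀ ℝ)) : Prop :=
  ∀ (t : Lp) (p : MIdx d) (τ : S.V) (l : Dr) (k : MIdx d) (L : List (Odx Lp d × S.V)),
    graft (t, p) τ (S.node l k ↑L) =
      msum (k ⊓ p) (fun ℓ =>
        (mchoose k ℓ : ℝ) •
          Finsupp.single (S.node l (k - ℓ) (((t, p - ℓ), τ) ::ₘ (↑L : Multiset _))) 1)
      + ∑ j : Fin L.length, S.replace l k L j (graft (t, p) τ (L.get j).2)

/-- Defining recursion of the symmetry factor `S(τ)`. -/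
def SymSpec [DecidableEq Lp] [DecidableEq S.V] (sym : S.V → ℕ) : Prop :=
  ∀ (l : Dr) (k : MIdx d) (M : Multiset (Odx Lp d × S.V)),
    sym (S.node l k M) =
      mfact k * ∏ x ∈ M.toFinset, Nat.factorial (M.count x) * sym x.2 ^ M.count x

/-- Defining recursion of the inner product on `𝕍`. -/
def IPSpec (ip : S.V → S.V → ℝ) : Prop :=
  ∀ (l l' : Dr) (k k' : MIdx d) (L L' : List (Odx Lp d × S.V)),
    ip (S.node l k ↑L) (S.node l' k' ↑L') =
      (if l = l' ∧ k = k' then (mfact k : ℝ) else 0) *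
        ∑ s : Fin L.length ≃ Fin L'.length,
          ∏ j : Fin L.length,
            (if (L.get j).1 = (L'.get (s j)).1 then ip (L.get j).2 (L'.get (s j)).2 else 0)

/-- Defining recursion of `Υ^F`. -/
def UpsSpec [DecidableEq Lp] (F : Lp → Dr → FnO Lp d) (Ups : Lp → S.V → FnO Lp d) : Prop :=
  ∀ (t : Lp) (l : Dr) (k : MIdx d) (L : List (Odx Lp d × S.V)),
    Ups t (S.node l k ↑L) = fun x =>
      (∏ j : Fin L.length, Ups (L.get j).1.1 (L.get j).2 x) *
        mpderiv k (Dlist (L.map Prod.fst) (F t l)) x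

/-- Defining recursion of the raising operator `↑̂_i` on `𝕍`. -/
def RaiseSpec (raise : Fin (d+1) → S.V → (S.V →₀ ℝ)) : Prop :=
  ∀ (i : Fin (d+1)) (l : Dr) (k : MIdx d) (L : List (Odx Lp d × S.V)),
    raise i (S.node l k ↑L) =
      Finsupp.single (S.node l (k + munit i) ↑L) 1
      + ∑ j : Fin L.length, S.replace l k L j (raise i (L.get j).2)

/-- Defining recursion of the cutting operator `⋖̂*_o : 𝕍 → 𝕍 ⊗ 𝕍` (elements of
`𝕍 ⊗ 𝕍` represented as finitely supported functions on pairs of trees, a pair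
`(branch, trunk)` recording a cut). -/
def CutSpec [DecidableEq Lp] (cut : Odx Lp d → S.V → (S.V × S.V →₀ ℝ)) : Prop :=
  ∀ (t : Lp) (p : MIdx d) (l : Dr) (k : MIdx d) (L : List (Odx Lp d × S.V)),
    cut (t, p) (S.node l k ↑L) =
      (∑ j : Fin L.length,
        if (L.get j).1.1 = t ∧ (L.get j).1.2 ≤ p then
          ((mfact (p - (L.get j).1.2) : ℝ))⁻¹ •
            Finsupp.single ((L.get j).2,
              S.node l (k + (p - (L.get j).1.2)) ↑(L.eraseIdx j)) 1
        else 0)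
      + ∑ j : Fin L.length,
          (cut (t, p) (L.get j).2).sum fun ab c =>
            Finsupp.single (ab.1, S.node l k ↑(L.set j ((L.get j).1, ab.2))) c

/-- Defining recursion of the lowering operator `↑̂*_i` on `𝕍`. -/
def LowSpec (low : Fin (d+1) → S.V → (S.V →₀ ℝ)) : Prop :=
  ∀ (i : Fin (d+1)) (l : Dr) (k : MIdx d) (L : List (Odx Lp d × S.V)),
    low i (S.node l k ↑L) =
      (k i : ℝ) • Finsupp.single (S.node l (k - munit i) ↑L) 1
      + ∑ j : Fin L.length, S.replace l k L j (low i (L.get j).2)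

/-- Defining recursion of the predicate "`τ` is `𝔱`-non-vanishing for `F`". -/
def NVSpec [DecidableEq Lp] (F : Lp → Dr → FnO Lp d) (NV : Lp → S.V → Prop) : Prop :=
  ∀ (t : Lp) (l : Dr) (k : MIdx d) (L : List (Odx Lp d × S.V)),
    NV t (S.node l k ↑L) ↔
      (mpderiv k (Dlist (L.map Prod.fst) (F t l)) ≠ 0 ∧
        ∀ j : Fin L.length, NV (L.get j).1.1 (L.get j).2)

/-- The coefficient series of `U_o − u_o·𝟏`, for the jet `U` with Taylor coefficients `u`
and planted-tree coefficients `c_𝔱(τ)/S(τ)`. -/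
noncomputable def uSeries (z : Dr) (u : Odx Lp d → ℝ) (c : Lp → S.V → ℝ) (sym : S.V → ℕ)
    (o : Odx Lp d) (σ : S.V) : ℝ :=
  (∑ᶠ q : MIdx d, if q ≠ 0 ∧ σ = S.node z q 0 then u (o.1, o.2 + q) / (mfact q : ℝ) else 0) +
  ∑ᶠ τ : S.V, if σ = S.node z 0 {(o, τ)} then c o.1 τ / (sym τ : ℝ) else 0

/-- The coefficient series of the product `(U − u·𝟏)^α · Ξ_l`, expanded by multilinearity
using the commutative tree product merging the roots. -/
noncomputable def powCoef (coef : Odx Lp d → S.V → ℝ) (l : Dr) (α : Odx Lp d →₀ ℕ)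
    (σ : S.V) : ℝ :=
  ∑ᶠ g : Fin (Finsupp.toMultiset α).toList.length → S.V,
    (∏ r, coef ((Finsupp.toMultiset α).toList.get r) (g r)) *
      (if σ = S.merge l g then 1 else 0)

/-- The coefficient series of `Σ_{𝔩∈𝔇} F^𝔩_𝔱(U)·Ξ_𝔩`, where
`F^𝔩_𝔱(U)·Ξ_𝔩 = Σ_α (D^α F^𝔩_𝔱(u)/α!)·(U − u·𝟏)^α·Ξ_𝔩`. -/
noncomputable def lhsCoef [DecidableEq Lp] (F : Lp → Dr → FnO Lp d) (u : Odx Lp d → ℝ)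
    (coef : Odx Lp d → S.V → ℝ) (t : Lp) (σ : S.V) : ℝ :=
  ∑ᶠ l : Dr, ∑ᶠ α : Odx Lp d →₀ ℕ,
    Dexp α (F t l) u / (afact α : ℝ) * S.powCoef coef l α σ

/-- Defining recursion of the 𝔰-degree `|·|_𝔰` of decorated trees (with driver labels in
`𝔏₋ ⊔ {𝟎}`, encoded as `Option Lm` with `none = 𝟎`). -/
def DegSpec {Lm : Type} (S : TreeV Lp (Option Lm) d) (s : Fin (d+1) → ℝ)
    (degL : Lp → ℝ) (degLm : Lm → ℝ) (deg : S.V → ℝ) : Prop :=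
  ∀ (l : Option Lm) (k : MIdx d) (M : Multiset (Odx Lp d × S.V)),
    deg (S.node l k M) =
      l.elim 0 degLm + wdeg s k +
        ((M.map fun x => (degL x.1.1 - wdeg s x.1.2) + deg x.2).sum)

end TreeV

/-! ### The trees of `𝔅` -/

/-- Polynomial node-decoration factors `𝓘_{(𝔱,p)}[X^k]` with `p ≤ k` and `p ≠ k`;
an element is a pair `((𝔱,p), k)` subject to these constraints. -/
abbrev PolyDec (Lp : Type) (d : ℕ) :=
  {x : Odx Lp d × MIdx d // x.1.2 ≤ x.2 ∧ x.1.2 ≠ x.2}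

/-- Raise the polynomial exponent of a `PolyDec` by `e_i`. -/
def PolyDec.bump {Lp : Type} {d : ℕ} (pd : PolyDec Lp d) (i : Fin (d+1)) : PolyDec Lp d :=
  ⟨(pd.1.1, pd.1.2 + munit i), by
    constructor
    · exact fun j => le_trans (pd.2.1 j) (Nat.le_add_right _ _)
    · intro h
      have hi : pd.1.1.2 i ≤ pd.1.2 i := pd.2.1 i
      have h' : pd.1.1.2 i = pd.1.2 i + munit i i := congrFun h i
      simp only [munit, Pi.single_eq_same] at h'
      omega⟩

/-- The fresh polynomial decoration `𝓘_{(𝔱,p)}[X^{p+e_i}]`. -/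
def freshPD {Lp : Type} {d : ℕ} (o : Odx Lp d) (i : Fin (d+1)) : PolyDec Lp d :=
  ⟨(o, o.2 + munit i), by
    constructor
    · exact fun j => Nat.le_add_right _ _
    · intro h
      have h' : o.2 i = o.2 i + munit i i := congrFun h i
      simp only [munit, Pi.single_eq_same] at h'
      omega⟩

/-- Lower the polynomial exponent of a `PolyDec` by `e_i`. -/
def PolyDec.lower {Lp : Type} {d : ℕ} (pd : PolyDec Lp d) (i : Fin (d+1))
    (h : pd.1.1.2 + munit i ≤ pd.1.2) (hne : ¬ pd.1.2 - munit i = pd.1.1.2) : PolyDec Lp d :=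
  ⟨(pd.1.1, pd.1.2 - munit i), by
    constructor
    · intro j
      have hj := h j
      simp only [Pi.add_apply, Pi.sub_apply] at hj ⊢
      omega
    · exact fun hh => hne hh.symm⟩

/-- The set `𝔅` of decorated rooted trees with polynomial node decorations, presented
abstractly. -/
structure TreeB (Lp Dr : Type) (d : ℕ) where
  B : Type
  node : Dr → Multiset (PolyDec Lp d) → Multiset (Odx Lp d × B) → B
  node_bij : Function.Bijective
    (fun x : Dr × Multiset (PolyDec Lp d) × Multiset (Odx Lp d × B) => node x.1 x.2.1 x.2.2)
  ind : ∀ P : B → Prop,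
    (∀ l N (M : Multiset (Odx Lp d × B)), (∀ x ∈ M, P x.2) → P (node l N M)) → ∀ σ, P σ

namespace TreeB

variable {Lp Dr : Type} {d : ℕ} (S : TreeB Lp Dr d)

/-- Rebuild a tree after replacing the `j`-th branch by a linear combination of trees. -/
noncomputable def replace (l : Dr) (N : List (PolyDec Lp d)) (L : List (Odx Lp d × S.B))
    (j : Fin L.length) (w : S.B →₀ ℝ) : S.B →₀ ℝ :=
  w.sum fun σ' c => Finsupp.single (S.node l ↑N (↑(L.set j ((L.get j).1, σ')))) c

/-- Defining recursion of `Υ̊^F`. -/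
def UpsSpec [DecidableEq Lp] (F : Lp → Dr → FnO Lp d) (Ups : Lp → S.B → FnO Lp d) : Prop :=
  ∀ (t : Lp) (l : Dr) (N : List (PolyDec Lp d)) (L : List (Odx Lp d × S.B)),
    Ups t (S.node l ↑N ↑L) = fun x =>
      (∏ i : Fin N.length, x ((N.get i).1.1.1, (N.get i).1.2)) *
      (∏ j : Fin L.length, Ups (L.get j).1.1 (L.get j).2 x) *
      Dlist (N.map (fun pd => pd.1.1) ++ L.map Prod.fst) (F t l) x

/-- Defining recursion of the grafting operators `⋖_o` on `𝔅`. -/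
def GraftSpec (graft : Odx Lp d → S.B → S.B → (S.B →₀ ℝ)) : Prop :=
  ∀ (o : Odx Lp d) (σ' : S.B) (l : Dr) (N : List (PolyDec Lp d)) (L : List (Odx Lp d × S.B)),
    graft o σ' (S.node l ↑N ↑L) =
      Finsupp.single (S.node l ↑N ((o, σ') ::ₘ (↑L : Multiset _))) 1
      + (∑ j : Fin L.length, S.replace l N L j (graft o σ' (L.get j).2))
      + ∑ i : Fin N.length,
          (if o = ((N.get i).1.1.1, (N.get i).1.2) then
            Finsupp.single
              (S.node l ↑(N.eraseIdx i) (((N.get i).1.1, σ') ::ₘ (↑L : Multiset _))) 1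
          else 0)

/-- Defining recursion of the inner product on `𝔹`. -/
def IPSpec (ip : S.B → S.B → ℝ) : Prop :=
  ∀ (l l' : Dr) (N N' : List (PolyDec Lp d)) (L L' : List (Odx Lp d × S.B)),
    ip (S.node l ↑N ↑L) (S.node l' ↑N' ↑L') =
      (if l = l' then 1 else 0) *
      (∑ s : Fin N.length ≃ Fin N'.length,
        ∏ i : Fin N.length,
          (if (N.get i).1 = (N'.get (s i)).1 then
            (mfact ((N.get i).1.2 - (N.get i).1.1.2) : ℝ)
          else 0)) *
      ∑ s : Fin L.length ≃ Fin L'.length,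
        ∏ j : Fin L.length,
          (if (L.get j).1 = (L'.get (s j)).1 then ip (L.get j).2 (L'.get (s j)).2 else 0)

/-- Defining recursion of the raising operator `↑_i` on `𝔅`, producing a formal series
(represented by its coefficient function `𝔅 → ℝ`). -/
def RaiseSpec (raise : Fin (d+1) → S.B → (S.B → ℝ)) : Prop :=
  ∀ (i : Fin (d+1)) (l : Dr) (N : List (PolyDec Lp d)) (L : List (Odx Lp d × S.B)),
    raise i (S.node l ↑N ↑L) = fun σ'' =>
      (∑ ib : Fin N.length,
        (if σ'' = S.node l ↑(N.set ib ((N.get ib).bump i)) ↑L then 1 else 0))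
      + (if ∃ o : Odx Lp d, σ'' = S.node l (freshPD o i ::ₘ (↑N : Multiset _)) ↑L then 1 else 0)
      + ∑ j : Fin L.length,
          ∑ᶠ σ' : S.B,
            raise i (L.get j).2 σ' *
              (if σ'' = S.node l ↑N ↑(L.set j ((L.get j).1, σ')) then 1 else 0)

/-- Defining recursion of the lowering operator `↑*_i` on `𝔅`. -/
def LowSpec (low : Fin (d+1) → S.B → (S.B →₀ ℝ)) : Prop :=
  ∀ (i : Fin (d+1)) (l : Dr) (N : List (PolyDec Lp d)) (L : List (Odx Lp d × S.B)),
    low i (S.node l ↑N ↑L) =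
      (∑ ib : Fin N.length,
        (if h : (N.get ib).1.1.2 + munit i ≤ (N.get ib).1.2 then
          (((N.get ib).1.2 i - (N.get ib).1.1.2 i : ℕ) : ℝ) •
            (if he : (N.get ib).1.2 - munit i = (N.get ib).1.1.2 then
              Finsupp.single (S.node l ↑(N.eraseIdx ib) ↑L) 1
            else
              Finsupp.single (S.node l ↑(N.set ib ((N.get ib).lower i h he)) ↑L) 1)
        else 0))
      + ∑ j : Fin L.length, S.replace l N L j (low i (L.get j).2)

/-- Defining recursion of the cutting operator `⋖*_o : 𝔹 → 𝔹 ⊗ 𝔹` (elements of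
`𝔹 ⊗ 𝔹` represented as finitely supported functions on pairs of trees, a pair
`(branch, trunk)` recording a cut). -/
def CutSpec (cut : Odx Lp d → S.B → (S.B × S.B →₀ ℝ)) : Prop :=
  ∀ (t : Lp) (p : MIdx d) (l : Dr) (N : List (PolyDec Lp d)) (L : List (Odx Lp d × S.B)),
    cut (t, p) (S.node l ↑N ↑L) =
      (∑ j : Fin L.length,
        (if hc : (L.get j).1.1 = t ∧ (L.get j).1.2 ≤ p then
          ((mfact (p - (L.get j).1.2) : ℝ))⁻¹ •
            Finsupp.single ((L.get j).2,
              S.node l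
                (if he : (L.get j).1.2 = p then (↑N : Multiset (PolyDec Lp d))
                 else (⟨((L.get j).1, p), hc.2, he⟩ ::ₘ (↑N : Multiset (PolyDec Lp d))))
                ↑(L.eraseIdx j)) 1
        else 0))
      + ∑ j : Fin L.length,
          (cut (t, p) (L.get j).2).sum fun ab c =>
            Finsupp.single (ab.1, S.node l ↑N ↑(L.set j ((L.get j).1, ab.2))) c

end TreeB

/-- Defining recursion of the map `Q : 𝔹 → 𝕍` collapsing polynomial decorations. -/
def QSpec {Lp Dr : Type} {d : ℕ} (SB : TreeB Lp Dr d) (SV : TreeV Lp Dr d)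
    (Qf : SB.B → SV.V) : Prop :=
  ∀ (l : Dr) (N : Multiset (PolyDec Lp d)) (M : Multiset (Odx Lp d × SB.B)),
    Qf (SB.node l N M) =
      SV.node l ((N.map fun pd => pd.1.2 - pd.1.1.2).sum) (M.map fun x => (x.1, Qf x.2))

/-- The generic summand of the multivariate Faà di Bruno formula, indexed by `(r, q⃗, m⃗)`;
it vanishes unless `(q⃗, m⃗) ∈ I(r,k)`. -/
noncomputable def fdbSummand {Lp : Type} {d : ℕ} [DecidableEq Lp] (lo : LinearOrder (MIdx d))
    (F : FnO Lp d) (k : MIdx d)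
    (p : Σ r : ℕ, (Fin r → MIdx d) × (Fin r → (Odx Lp d →₀ ℕ))) : FnO Lp d :=
  if (∀ j, p.2.2 j ≠ 0) ∧ (∀ j j' : Fin p.1, j < j' → lo.lt (p.2.1 j) (p.2.1 j')) ∧
      (∀ j, lo.lt 0 (p.2.1 j)) ∧ (∑ j, ((p.2.2 j).sum fun _ n => n) • p.2.1 j) = k then
    fun x =>
      (∏ j, (p.2.2 j).prod fun o n =>
        (x (o.1, o.2 + p.2.1 j) / (mfact (p.2.1 j) : ℝ)) ^ n / (Nat.factorial n : ℝ)) *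
        Dexp (∑ j, p.2.2 j) F x
  else 0

/-! ### Generic decorated trees -/

/-- Decorated rooted trees over node species `N` and edge species `E`,
presented abstractly. -/
structure GTree (N E : Type) where
  T : Type
  node : N → Multiset (E × T) → T
  node_bij : Function.Bijective (fun x : N × Multiset (E × T) => node x.1 x.2)
  ind : ∀ P : T → Prop, (∀ Y M, (∀ x ∈ M, P x.2) → P (node Y M)) → ∀ τ, P τ

namespace GTree

/-- Multilinear expansion of a list of edge-decorated linear combinations of trees into a
linear combination of branch multisets. -/
noncomputable def expandAux {N E : Type} (S : GTree N E) :
    List (E × (S.T →₀ ℝ)) → (Multiset (E × S.T) →₀ ℝ)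
  | [] => Finsupp.single 0 1
  | (e, w) :: L =>
      w.sum fun τ' c => (S.expandAux L).sum fun M c' => Finsupp.single ((e, τ') ::ₘ M) (c * c')

/-- Defining recursion of the functorial extension `𝔗(A)` of a linear map `A` between
the free vector spaces on the node species. -/
def MapSpec {N N' E : Type} (S : GTree N E) (S' : GTree N' E)
    (A : N → (N' →₀ ℝ)) (TA : S.T → (S'.T →₀ ℝ)) : Prop :=
  ∀ (Y : N) (L : List (E × S.T)),
    TA (S.node Y ↑L) =
      (A Y).sum fun Y' c =>
        (S'.expandAux (L.map fun x => (x.1, TA x.2))).sum fun M c' =>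
          Finsupp.single (S'.node Y' M) (c * c')

/-- Defining recursion of the inner product on `𝔗(𝖭,𝖤)` induced by an inner product on
the node species. -/
def IPSpec {N E : Type} (S : GTree N E) (ipN : N → N → ℝ) (ip : S.T → S.T → ℝ) : Prop :=
  ∀ (Y Y' : N) (L L' : List (E × S.T)),
    ip (S.node Y ↑L) (S.node Y' ↑L') =
      ipN Y Y' * ∑ s : Fin L.length ≃ Fin L'.length,
        ∏ j : Fin L.length,
          (if (L.get j).1 = (L'.get (s j)).1 then ip (L.get j).2 (L'.get (s j)).2 else 0)

end GTree

/-!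
Give `F = Σ_j G_j 𝒳^{α_j}` (coefficients depending only on `𝒪₊`, exponents supported on `𝒪₋`)
the regularity `min_j reg(α_j)`, where `reg(α) = Σ_o α[o] reg(o)`. Then `D_o` raises the regularity
by `max(-reg(o), 0)`: for `o ∈ 𝒪₊` it only hits the coefficients, for `o ∈ 𝒪₋` it lowers an
exponent. Multiplication by `𝒳_o` lowers it by at most `max(-reg(o), 0)`, so
`∂_i = Σ_o 𝒳_{o+e_i} D_o` lowers it by at most `𝔰_i`, since `reg(o + e_i) = reg(o) - 𝔰_i`.
As `reg < 0` on `𝒪₋`, a nonzero function has regularity `≤ 0`. Together with subcriticality,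
made uniform by some `ε > 0`, this is the power-counting bound
`reg(𝔱) + ε ≤ reg(𝔩) + |k|_𝔰 + Σ_{o ∈ L} min(reg(o), 0)` for every
nonvanishing `∂^k D_L F^𝔩_𝔱`.

For a `𝔱`-non-vanishing tree the bound says that the excess `|τ|_𝔰 - (reg(𝔱) - |𝔱|_𝔰)` is at least
`ε` plus the excesses of the branches. So a degree bound bounds the number of edges, after which
the polynomial and edge decorations range over finite sets (an edge decoration in `𝒪₋` must occur
in one of the finitely many exponents `α_j`), and only finitely many trees remain.
-/

section Regularity

variable {Lp : Type} {d : ℕ}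

lemma wdeg_add (s : Fin (d+1) → ℝ) (k l : MIdx d) : wdeg s (k + l) = wdeg s k + wdeg s l := by
  simp only [wdeg, Pi.add_apply, Nat.cast_add, add_mul, Finset.sum_add_distrib]

lemma wdeg_munit (s : Fin (d+1) → ℝ) (i : Fin (d+1)) : wdeg s (munit i) = s i := by
  simp [wdeg, munit, Pi.single_apply]

lemma le_wdeg_apply {s : Fin (d+1) → ℝ} (hs : ∀ i, 1 ≤ s i) (k : MIdx d) (i : Fin (d+1)) :
    (k i : ℝ) ≤ wdeg s k :=
  calc (k i : ℝ) ≤ k i * s i := le_mul_of_one_le_right (Nat.cast_nonneg _) (hs i)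
    _ ≤ wdeg s k := Finset.single_le_sum (f := fun j => (k j : ℝ) * s j)
        (fun j _ => mul_nonneg (Nat.cast_nonneg _) (zero_le_one.trans (hs j)))
        (Finset.mem_univ i)

lemma finite_setOf_wdeg_le {s : Fin (d+1) → ℝ} (hs : ∀ i, 1 ≤ s i) (W : ℝ) :
    {k : MIdx d | wdeg s k ≤ W}.Finite :=
  (Set.finite_Iic fun _ => ⌊W⌋₊).subset fun k hk i =>
    Nat.le_floor ((le_wdeg_apply hs k i).trans hk)

noncomputable def regO (regp : Lp → ℝ) (s : Fin (d+1) → ℝ) (o : Odx Lp d) : ℝ :=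
  regp o.1 - wdeg s o.2

noncomputable def regExp (regp : Lp → ℝ) (s : Fin (d+1) → ℝ) (β : Odx Lp d →₀ ℕ) : ℝ :=
  β.sum fun o n => (n : ℝ) * regO regp s o

variable {regp : Lp → ℝ} {s : Fin (d+1) → ℝ}

lemma regO_add_munit (o : Odx Lp d) (i : Fin (d+1)) :
    regO regp s (o.1, o.2 + munit i) = regO regp s o - s i := by
  simp only [regO, wdeg_add, wdeg_munit]; ring

lemma finite_setOf_regO_pos [Finite Lp] (hs : ∀ i, 1 ≤ s i) :
    {o : Odx Lp d | 0 < regO regp s o}.Finite := by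
  obtain ⟨R, hR⟩ := (Set.finite_range regp).bddAbove
  refine (Set.finite_univ.prod (finite_setOf_wdeg_le hs R)).subset fun o ho => ⟨trivial, ?_⟩
  have := hR ⟨o.1, rfl⟩
  simp only [Set.mem_ofPred_eq, regO] at ho ⊢
  linarith

lemma regExp_add (β γ : Odx Lp d →₀ ℕ) :
    regExp regp s (β + γ) = regExp regp s β + regExp regp s γ :=
  Finsupp.sum_add_index' (by simp) (by intros; push_cast; ring)

lemma regExp_single (o : Odx Lp d) (n : ℕ) :
    regExp regp s (Finsupp.single o n) = n * regO regp s o :=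
  Finsupp.sum_single_index (by simp)

lemma regExp_sub_single {β : Odx Lp d →₀ ℕ} {o : Odx Lp d} (h : β o ≠ 0) :
    regExp regp s (β - Finsupp.single o 1) = regExp regp s β - regO regp s o := by
  have hle : Finsupp.single o 1 ≤ β := Finsupp.single_le_iff.2 (Nat.one_le_iff_ne_zero.2 h)
  have := regExp_add (regp := regp) (s := s) (β - Finsupp.single o 1) (Finsupp.single o 1)
  rw [tsub_add_cancel_of_le hle, regExp_single] at this
  rw [this]; push_cast; ring

lemma regExp_nonpos {β : Odx Lp d →₀ ℕ} (h : ∀ o ∈ β.support, regO regp s o < 0) :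
    regExp regp s β ≤ 0 :=
  Finset.sum_nonpos fun o ho => mul_nonpos_of_nonneg_of_nonpos (Nat.cast_nonneg _) (h o ho).le

end Regularity

section Xpow

variable {Lp : Type} {d : ℕ}

lemma Xpow_add (β γ : Odx Lp d →₀ ℕ) (x : Odx Lp d → ℝ) :
    Xpow (β + γ) x = Xpow β x * Xpow γ x :=
  Finsupp.prod_add_index' (by simp) fun _ _ _ => pow_add _ _ _

lemma Xpow_single (o : Odx Lp d) (n : ℕ) (x : Odx Lp d → ℝ) :
    Xpow (Finsupp.single o n) x = x o ^ n :=
  Finsupp.prod_single_index (pow_zero _)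

lemma Xpow_eq_pow_mul_erase (β : Odx Lp d →₀ ℕ) (o : Odx Lp d) (x : Odx Lp d → ℝ) :
    Xpow β x = x o ^ β o * Xpow (β.erase o) x := by
  conv_lhs => rw [← Finsupp.single_add_erase o β]
  rw [Xpow_add, Xpow_single]

variable [DecidableEq Lp]

lemma Xpow_update (β : Odx Lp d →₀ ℕ) (o : Odx Lp d) (x : Odx Lp d → ℝ) (u : ℝ) :
    Xpow β (Function.update x o u) = u ^ β o * Xpow (β.erase o) x := by
  rw [Xpow_eq_pow_mul_erase β o, Function.update_self]
  congr 1
  refine Finsupp.prod_congr fun a ha => ?_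
  rw [Finsupp.support_erase] at ha
  rw [Function.update_of_ne (Finset.ne_of_mem_erase ha)]

lemma hasDerivAt_Xpow_update (β : Odx Lp d →₀ ℕ) (o : Odx Lp d) (x : Odx Lp d → ℝ) :
    HasDerivAt (fun u => Xpow β (Function.update x o u))
      (β o * Xpow (β - Finsupp.single o 1) x) (x o) := by
  have herase : (β - Finsupp.single o 1).erase o = β.erase o := by
    ext a
    rcases eq_or_ne a o with rfl | h
    · simp
    · simp [Finsupp.erase_ne h, Finsupp.single_eq_of_ne' (Ne.symm h)]
  simp only [Xpow_update]
  refine ((hasDerivAt_pow (β o) (x o)).mul_const (Xpow (β.erase o) x)).congr_deriv ?_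
  rw [Xpow_eq_pow_mul_erase (β - Finsupp.single o 1) o, herase, Finsupp.tsub_apply,
    Finsupp.single_eq_same]
  ring

end Xpow

section SmoothCoordinates

variable {Lp : Type} {d : ℕ} {H : FnO Lp d} {P : Set (Odx Lp d)}

lemma DependsOnlyOn.const_mul (hH : DependsOnlyOn H P) (c : ℝ) :
    DependsOnlyOn (fun x => c * H x) P :=
  fun x y hxy => congrArg (c * ·) (hH x y hxy)

lemma DependsOnlyOn.coord_mul (hH : DependsOnlyOn H P) {o : Odx Lp d} (ho : o ∈ P) :
    DependsOnlyOn (fun x => x o * H x) P :=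
  fun x y hxy => by simp only [hxy o ho, hH x y hxy]

lemma isSmoothCO_zero : IsSmoothCO (0 : FnO Lp d) :=
  ⟨∅, fun _ => 0, contDiff_const, fun _ => rfl⟩

lemma IsSmoothCO.dependsOnlyOn {S : Finset (Odx Lp d)} {g : (↥S → ℝ) → ℝ}
    (hH : ∀ x, H x = g fun o => x o.1) : DependsOnlyOn H ↑S :=
  fun x y hxy => by simp only [hH]; congr 1; funext o; exact hxy o o.2

lemma IsSmoothCO.const_mul (hH : IsSmoothCO H) (c : ℝ) : IsSmoothCO (fun x => c * H x) := by
  obtain ⟨S, g, hg, hHg⟩ := hH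
  exact ⟨S, fun y => c * g y, contDiff_const.mul hg, fun x => by simp only [hHg]⟩

lemma IsSmoothCO.coord_mul (hH : IsSmoothCO H) (o : Odx Lp d) :
    IsSmoothCO (fun x => x o * H x) := by
  obtain ⟨S, g, hg, hHg⟩ := hH
  let incl : ↥S → ↥(insert o S) := fun i => ⟨i, Finset.mem_insert_of_mem i.2⟩
  refine ⟨insert o S, fun y => y ⟨o, Finset.mem_insert_self o S⟩ * g (y ∘ incl), ?_,
    fun x => by simp only [hHg]; rfl⟩
  exact (contDiff_apply ℝ ℝ _).mul (hg.comp (contDiff_pi.2 fun i => contDiff_apply ℝ ℝ _))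

variable [DecidableEq Lp]

lemma DependsOnlyOn.apply_update (hH : DependsOnlyOn H P) {o : Odx Lp d} (ho : o ∉ P)
    (x : Odx Lp d → ℝ) (u : ℝ) : H (Function.update x o u) = H x :=
  hH _ _ fun _ h' => Function.update_of_ne (ne_of_mem_of_not_mem h' ho) _ _

lemma DependsOnlyOn.dpart_eq_zero (hH : DependsOnlyOn H P) {o : Odx Lp d} (ho : o ∉ P) :
    Dpart o H = 0 := by
  funext x
  simp [Dpart, hH.apply_update ho]

lemma DependsOnlyOn.dpart (hH : DependsOnlyOn H P) (o : Odx Lp d) :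
    DependsOnlyOn (Dpart o H) P := by
  by_cases ho : o ∈ P
  · intro x y hxy
    have hupd : (fun u => H (Function.update x o u)) = fun u => H (Function.update y o u) :=
      funext fun u => hH _ _ fun o' ho' => by
        rcases eq_or_ne o' o with rfl | h
        · simp
        · rw [Function.update_of_ne h, Function.update_of_ne h, hxy o' ho']
    simp only [Dpart, hupd, hxy o ho]
  · rw [hH.dpart_eq_zero ho]
    exact fun _ _ _ => rfl

lemma IsSmoothCO.differentiableAt_update (hH : IsSmoothCO H) (x : Odx Lp d → ℝ)
    (o : Odx Lp d) (t : ℝ) : DifferentiableAt ℝ (fun u => H (Function.update x o u)) t := by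
  obtain ⟨S, g, hg, hH⟩ := hH
  simp only [hH]
  refine (hg.differentiable (by simp)).differentiableAt.comp t
    (differentiableAt_pi.2 fun i => ?_)
  rcases eq_or_ne i.1 o with h | h
  · simp only [h, Function.update_self]; exact differentiableAt_id
  · simp only [Function.update_of_ne h]; exact differentiableAt_const _

lemma IsSmoothCO.hasDerivAt_update (hH : IsSmoothCO H) (x : Odx Lp d → ℝ) (o : Odx Lp d) :
    HasDerivAt (fun u => H (Function.update x o u)) (Dpart o H x) (x o) :=
  (hH.differentiableAt_update x o (x o)).hasDerivAt

lemma hasDerivAt_update_of_mem {S : Finset (Odx Lp d)} {g : (↥S → ℝ) → ℝ}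
    (hg : ContDiff ℝ (⊤ : ℕ∞) g) (x : Odx Lp d → ℝ) {o : Odx Lp d} (ho : o ∈ S) :
    HasDerivAt (fun u => g fun i : ↥S => Function.update x o u i)
      (fderiv ℝ g (fun i : ↥S => x i) (Pi.single ⟨o, ho⟩ 1)) (x o) := by
  have hupd : ∀ u, (fun i : ↥S => Function.update x o u i)
      = Function.update (fun i : ↥S => x i) ⟨o, ho⟩ u :=
    fun u => Function.update_comp_eq_of_injective x Subtype.val_injective ⟨o, ho⟩ u
  simp only [hupd]
  have h := ((hg.differentiable (by simp)) (Function.update (fun i : ↥S => x i) ⟨o, ho⟩ (x o))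
    ).hasFDerivAt.comp_hasDerivAt (x o) (hasDerivAt_update (fun i : ↥S => x i) ⟨o, ho⟩ (x o))
  rwa [show x o = (fun i : ↥S => x i) ⟨o, ho⟩ from rfl, Function.update_eq_self] at h

lemma IsSmoothCO.dpart (hH : IsSmoothCO H) (o : Odx Lp d) : IsSmoothCO (Dpart o H) := by
  obtain ⟨S, g, hg, hHg⟩ := hH
  by_cases ho : o ∈ S
  · refine ⟨S, fun y => fderiv ℝ g y (Pi.single ⟨o, ho⟩ 1),
      (ContinuousLinearMap.apply ℝ ℝ _).contDiff.comp (hg.fderiv_right (by simp)), fun x => ?_⟩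
    simp only [Dpart, hHg, (hasDerivAt_update_of_mem hg x ho).deriv]
  · rw [(IsSmoothCO.dependsOnlyOn hHg).dpart_eq_zero ho]
    exact isSmoothCO_zero

lemma IsSmoothCO.finite_dpart_ne_zero (hH : IsSmoothCO H) :
    {o : Odx Lp d | Dpart o H ≠ 0}.Finite := by
  obtain ⟨S, g, -, hHg⟩ := hH
  exact S.finite_toSet.subset fun o ho => by
    by_contra h
    exact ho ((IsSmoothCO.dependsOnlyOn hHg).dpart_eq_zero h)

end SmoothCoordinates

section Expansions

variable {Lp : Type} {d : ℕ}

noncomputable def monomial (H : FnO Lp d) (β : Odx Lp d →₀ ℕ) : FnO Lp d := fun x => H x * Xpow β x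

variable (Op U : Set (Odx Lp d)) (regp : Lp → ℝ) (s : Fin (d+1) → ℝ)

def regMonomials (c : ℝ) : Set (FnO Lp d) :=
  {F | ∃ H β, IsSmoothCO H ∧ DependsOnlyOn H Op ∧ ↑β.support ⊆ U ∧ c ≤ regExp regp s β ∧
    F = monomial H β}

def regExpansions (c : ℝ) : AddSubmonoid (FnO Lp d) :=
  AddSubmonoid.closure (regMonomials Op U regp s c)

variable {Op U regp s}

lemma monomial_zero (β : Odx Lp d →₀ ℕ) : monomial (0 : FnO Lp d) β = 0 :=
  funext fun _ => zero_mul _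

lemma monomial_mem_regExpansions {c : ℝ} {H : FnO Lp d} {β : Odx Lp d →₀ ℕ}
    (hH : IsSmoothCO H) (hHOp : DependsOnlyOn H Op) (hβ : ↑β.support ⊆ U)
    (hc : c ≤ regExp regp s β) : monomial H β ∈ regExpansions Op U regp s c :=
  AddSubmonoid.subset_closure ⟨H, β, hH, hHOp, hβ, hc, rfl⟩

lemma sum_monomial_mem_regExpansions {c : ℝ} {m : ℕ} {G : Fin m → FnO Lp d}
    {α : Fin m → (Odx Lp d →₀ ℕ)} (hG : ∀ j, IsSmoothCO (G j))
    (hGOp : ∀ j, DependsOnlyOn (G j) Op) (hα : ∀ j, ↑(α j).support ⊆ U)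
    (hc : ∀ j, c ≤ regExp regp s (α j)) :
    (fun x => ∑ j, G j x * Xpow (α j) x) ∈ regExpansions Op U regp s c := by
  have hsum : (fun x => ∑ j, G j x * Xpow (α j) x) = ∑ j, monomial (G j) (α j) :=
    funext fun x => by simp [monomial, Finset.sum_apply]
  rw [hsum]
  exact sum_mem fun j _ => monomial_mem_regExpansions (hG j) (hGOp j) (hα j) (hc j)

lemma regExpansions_mono {U' : Set (Odx Lp d)} {c c' : ℝ} (hU : U ⊆ U') (hc : c' ≤ c) :
    regExpansions Op U regp s c ≤ regExpansions Op U' regp s c' :=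
  AddSubmonoid.closure_mono fun _ ⟨H, β, hH, hHOp, hβ, hβc, hF⟩ =>
    ⟨H, β, hH, hHOp, hβ.trans hU, hc.trans hβc, hF⟩

lemma le_zero_of_mem_regExpansions (hU : ∀ o ∈ U, regO regp s o < 0) {c : ℝ} {F : FnO Lp d}
    (hF : F ∈ regExpansions Op U regp s c) (hne : F ≠ 0) : c ≤ 0 := by
  by_contra! hc
  have hempty : regMonomials Op U regp s c = ∅ :=
    Set.eq_empty_of_forall_notMem fun _ ⟨_, β, _, _, hβ, hβc, _⟩ =>
      (hc.trans_le hβc).not_ge (regExp_nonpos fun o ho => hU o (hβ ho))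
  rw [regExpansions, hempty, AddSubmonoid.closure_empty, AddSubmonoid.mem_bot] at hF
  exact hne hF

lemma coord_mul_mem_regExpansions {c : ℝ} {F : FnO Lp d} (hF : F ∈ regExpansions Op U regp s c)
    {o : Odx Lp d} (ho : o ∈ Op ∨ o ∈ U) :
    (fun x => x o * F x) ∈ regExpansions Op U regp s (c + min (regO regp s o) 0) := by
  induction hF using AddSubmonoid.closure_induction with
  | mem F hF =>
    obtain ⟨H, β, hH, hHOp, hβ, hβc, rfl⟩ := hF
    rcases ho with ho | ho
    · have hmul : (fun x => x o * monomial H β x) = monomial (fun x => x o * H x) β :=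
        funext fun x => (mul_assoc _ _ _).symm
      rw [hmul]
      refine monomial_mem_regExpansions (hH.coord_mul o) (hHOp.coord_mul ho) hβ ?_
      linarith [min_le_right (regO regp s o) 0]
    · have hmul : (fun x => x o * monomial H β x) = monomial H (β + Finsupp.single o 1) := by
        funext x; simp only [monomial, Xpow_add, Xpow_single]; ring
      rw [hmul]
      refine monomial_mem_regExpansions hH hHOp (fun a ha => ?_) ?_
      · rcases Finset.mem_union.1 (Finsupp.support_add ha) with h | h
        · exact hβ h
        · rwa [Finset.mem_singleton.1 (Finsupp.support_single_subset h)]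
      · rw [regExp_add, regExp_single, Nat.cast_one, one_mul]
        linarith [min_le_left (regO regp s o) 0]
  | zero =>
    have h0 : (fun x : Odx Lp d → ℝ => x o * (0 : FnO Lp d) x) = 0 := funext fun _ => mul_zero _
    rw [h0]
    exact zero_mem _
  | add F G _ _ hF hG =>
    have hadd : (fun x => x o * (F + G) x) = (fun x => x o * F x) + fun x => x o * G x :=
      funext fun _ => mul_add _ _ _
    rw [hadd]
    exact add_mem hF hG

variable [DecidableEq Lp]

lemma IsSmoothCO.differentiableAt_monomial_update {H : FnO Lp d} (hH : IsSmoothCO H)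
    (β : Odx Lp d →₀ ℕ) (x : Odx Lp d → ℝ) (o : Odx Lp d) :
    DifferentiableAt ℝ (fun u => monomial H β (Function.update x o u)) (x o) :=
  (hH.differentiableAt_update x o _).mul (hasDerivAt_Xpow_update β o x).differentiableAt

lemma IsSmoothCO.dpart_monomial {H : FnO Lp d} (hH : IsSmoothCO H) (β : Odx Lp d →₀ ℕ)
    (o : Odx Lp d) :
    Dpart o (monomial H β) =
      monomial (Dpart o H) β + monomial (fun x => β o * H x) (β - Finsupp.single o 1) := by
  funext x
  have h := (hH.hasDerivAt_update x o).mul (hasDerivAt_Xpow_update β o x)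
  simp only [Function.update_eq_self] at h
  refine h.deriv.trans ?_
  simp only [monomial, Pi.add_apply]
  ring

lemma dpart_add {F G : FnO Lp d} {o : Odx Lp d}
    (hF : ∀ x, DifferentiableAt ℝ (fun u => F (Function.update x o u)) (x o))
    (hG : ∀ x, DifferentiableAt ℝ (fun u => G (Function.update x o u)) (x o)) :
    Dpart o (F + G) = Dpart o F + Dpart o G :=
  funext fun x => deriv_add (hF x) (hG x)

lemma Dpart_zero (o : Odx Lp d) : Dpart o (0 : FnO Lp d) = 0 := by
  funext x; simp [Dpart]

lemma differentiableAt_update_of_mem_regExpansions {c : ℝ} {F : FnO Lp d}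
    (hF : F ∈ regExpansions Op U regp s c) (x : Odx Lp d → ℝ) (o : Odx Lp d) :
    DifferentiableAt ℝ (fun u => F (Function.update x o u)) (x o) := by
  induction hF using AddSubmonoid.closure_induction with
  | mem F hF =>
    obtain ⟨H, β, hH, -, -, -, rfl⟩ := hF
    exact hH.differentiableAt_monomial_update β x o
  | zero => exact differentiableAt_const _
  | add F G _ _ hF hG => exact hF.add hG

lemma dpart_add_of_mem_regExpansions {c c' : ℝ} {F G : FnO Lp d}
    (hF : F ∈ regExpansions Op U regp s c) (hG : G ∈ regExpansions Op U regp s c')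
    (o : Odx Lp d) : Dpart o (F + G) = Dpart o F + Dpart o G :=
  dpart_add (differentiableAt_update_of_mem_regExpansions hF · o)
    (differentiableAt_update_of_mem_regExpansions hG · o)

lemma dpart_mem_regExpansions_of_mem_regMonomials (hOp : ∀ o ∈ Op, 0 < regO regp s o)
    (hU : ∀ o ∈ U, regO regp s o < 0) {c : ℝ} {F : FnO Lp d}
    (hF : F ∈ regMonomials Op U regp s c) (o : Odx Lp d) :
    Dpart o F ∈ regExpansions Op U regp s (c - min (regO regp s o) 0) := by
  obtain ⟨H, β, hH, hHOp, hβ, hβc, rfl⟩ := hF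
  have hβ' : ↑(β - Finsupp.single o 1).support ⊆ U :=
    (Finset.coe_subset.2 Finsupp.support_tsub).trans hβ
  rw [hH.dpart_monomial]
  have hvanish (hβo : β o = 0) :
      monomial (fun x => (β o : ℝ) * H x) (β - Finsupp.single o 1) = 0 := by
    funext x; simp [monomial, hβo]
  by_cases ho : o ∈ Op
  · have hβo : β o = 0 := by
      by_contra h
      exact (hOp o ho).not_gt (hU o (hβ (Finsupp.mem_support_iff.2 h)))
    rw [hvanish hβo, add_zero]
    refine monomial_mem_regExpansions (hH.dpart o) (hHOp.dpart o) hβ ?_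
    rw [min_eq_right (hOp o ho).le]; linarith
  · rw [hHOp.dpart_eq_zero ho, monomial_zero, zero_add]
    by_cases hβo : β o = 0
    · rw [hvanish hβo]; exact zero_mem _
    · have hr := hU o (hβ (Finsupp.mem_support_iff.2 hβo))
      refine monomial_mem_regExpansions (hH.const_mul _) (hHOp.const_mul _) hβ' ?_
      rw [regExp_sub_single hβo, min_eq_left hr.le]
      linarith

lemma dpart_mem_regExpansions (hOp : ∀ o ∈ Op, 0 < regO regp s o)
    (hU : ∀ o ∈ U, regO regp s o < 0) {c : ℝ} {F : FnO Lp d}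
    (hF : F ∈ regExpansions Op U regp s c) (o : Odx Lp d) :
    Dpart o F ∈ regExpansions Op U regp s (c - min (regO regp s o) 0) := by
  induction hF using AddSubmonoid.closure_induction with
  | mem F hF => exact dpart_mem_regExpansions_of_mem_regMonomials hOp hU hF o
  | zero => rw [Dpart_zero]; exact zero_mem _
  | add F G hF hG hF' hG' =>
    rw [dpart_add_of_mem_regExpansions hF hG]
    exact add_mem hF' hG'

lemma dpart_eq_zero_of_mem_regExpansions {c : ℝ} {F : FnO Lp d}
    (hF : F ∈ regExpansions Op U regp s c) {o : Odx Lp d} (hOp : o ∉ Op) (hU : o ∉ U) :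
    Dpart o F = 0 := by
  induction hF using AddSubmonoid.closure_induction with
  | mem F hF =>
    obtain ⟨H, β, hH, hHOp, hβ, -, rfl⟩ := hF
    have hβo : β o = 0 := Finsupp.notMem_support_iff.1 fun h => hU (hβ h)
    rw [hH.dpart_monomial, hHOp.dpart_eq_zero hOp]
    funext x; simp [monomial, hβo]
  | zero => exact Dpart_zero o
  | add F G hF hG hF' hG' =>
    rw [dpart_add_of_mem_regExpansions hF hG, hF', hG', add_zero]

lemma finite_dpart_ne_zero_of_mem_regExpansions {c : ℝ} {F : FnO Lp d}
    (hF : F ∈ regExpansions Op U regp s c) : {o : Odx Lp d | Dpart o F ≠ 0}.Finite := by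
  induction hF using AddSubmonoid.closure_induction with
  | mem F hF =>
    obtain ⟨H, β, hH, -, -, -, rfl⟩ := hF
    refine (hH.finite_dpart_ne_zero.union β.support.finite_toSet).subset fun o ho => ?_
    by_contra h
    simp only [Set.mem_union, Set.mem_ofPred_eq, not_or, not_not, Finset.mem_coe,
      Finsupp.notMem_support_iff] at h
    apply ho
    rw [hH.dpart_monomial, h.1]
    funext x; simp [monomial, h.2]
  | zero => simp [Dpart_zero]
  | add F G hF hG hF' hG' =>
    refine (hF'.union hG').subset fun o ho => ?_
    by_contra h
    simp only [Set.mem_union, Set.mem_ofPred_eq, not_or, not_not] at h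
    apply ho
    rw [dpart_add_of_mem_regExpansions hF hG, h.1, h.2, add_zero]

end Expansions

section PowerCounting

variable {Lp : Type} {d : ℕ} [DecidableEq Lp] {Op U : Set (Odx Lp d)} {regp : Lp → ℝ}
  {s : Fin (d+1) → ℝ}

lemma Dlist_zero (L : List (Odx Lp d)) : Dlist L (0 : FnO Lp d) = 0 := by
  induction L with
  | nil => rfl
  | cons o L ih => exact (congrArg (Dpart o) ih).trans (Dpart_zero o)

lemma pderivO_zero (i : Fin (d+1)) : pderivO i (0 : FnO Lp d) = 0 := by
  funext x
  simp [pderivO, Dpart_zero]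

lemma mpderiv_zero (k : MIdx d) : mpderiv k (0 : FnO Lp d) = 0 := by
  have hiter (i : Fin (d+1)) (n : ℕ) : (pderivO (Lp := Lp) i)^[n] 0 = 0 :=
    Function.iterate_fixed (pderivO_zero i) n
  unfold mpderiv
  induction List.finRange (d+1) with
  | nil => rfl
  | cons i l ih => rw [List.foldr_cons, ih, hiter]

lemma dlist_mem_regExpansions (hOp : ∀ o ∈ Op, 0 < regO regp s o)
    (hU : ∀ o ∈ U, regO regp s o < 0) {c : ℝ} {F : FnO Lp d}
    (hF : F ∈ regExpansions Op U regp s c) (L : List (Odx Lp d)) :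
    Dlist L F ∈ regExpansions Op U regp s (c - (L.map fun o => min (regO regp s o) 0).sum) := by
  induction L with
  | nil => simpa [Dlist] using hF
  | cons o L ih =>
    refine regExpansions_mono subset_rfl (le_of_eq ?_) (dpart_mem_regExpansions hOp hU ih o)
    simp only [List.map_cons, List.sum_cons]
    ring

lemma pderivO_mem_regExpansions (hOp : ∀ o ∈ Op, 0 < regO regp s o)
    (hU : ∀ o ∈ U, regO regp s o < 0) (hcover : ∀ o, o ∈ Op ∨ o ∈ U) (hs : ∀ i, 0 ≤ s i)
    {c : ℝ} {F : FnO Lp d} (hF : F ∈ regExpansions Op U regp s c) (i : Fin (d+1)) :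
    pderivO i F ∈ regExpansions Op U regp s (c - s i) := by
  set T := (finite_dpart_ne_zero_of_mem_regExpansions hF).toFinset
  have hsum : pderivO i F = ∑ o ∈ T, fun x => x (o.1, o.2 + munit i) * Dpart o F x := by
    funext x
    rw [Finset.sum_apply]
    refine finsum_eq_sum_of_support_subset _ fun o ho => ?_
    simp only [Set.Finite.coe_toFinset, Set.mem_ofPred_eq, T]
    rintro h
    simp [h] at ho
  rw [hsum]
  refine sum_mem fun o _ => regExpansions_mono subset_rfl ?_
    (coord_mul_mem_regExpansions (dpart_mem_regExpansions hOp hU hF o) (hcover _))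
  have : min (regO regp s o) 0 - s i ≤ min (regO regp s o - s i) 0 := by
    rw [← min_sub_sub_right]; exact min_le_min_left _ (by linarith [hs i])
  rw [regO_add_munit]
  linarith

lemma mpderiv_mem_regExpansions (hOp : ∀ o ∈ Op, 0 < regO regp s o)
    (hU : ∀ o ∈ U, regO regp s o < 0) (hcover : ∀ o, o ∈ Op ∨ o ∈ U) (hs : ∀ i, 0 ≤ s i)
    {c : ℝ} {F : FnO Lp d} (hF : F ∈ regExpansions Op U regp s c) (k : MIdx d) :
    mpderiv k F ∈ regExpansions Op U regp s (c - wdeg s k) := by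
  have hiter (i : Fin (d+1)) (n : ℕ) {c : ℝ} {G : FnO Lp d}
      (hG : G ∈ regExpansions Op U regp s c) :
      (pderivO i)^[n] G ∈ regExpansions Op U regp s (c - n * s i) := by
    induction n generalizing c G with
    | zero => simpa using hG
    | succ n ih =>
      rw [Function.iterate_succ_apply]
      refine regExpansions_mono subset_rfl (le_of_eq ?_)
        (ih (pderivO_mem_regExpansions hOp hU hcover hs hG i))
      push_cast; ring
  have hfold (l : List (Fin (d+1))) :
      l.foldr (fun i G => (pderivO i)^[k i] G) F ∈
        regExpansions Op U regp s (c - (l.map fun i => (k i : ℝ) * s i).sum) := by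
    induction l with
    | nil => simpa using hF
    | cons i l ih =>
      refine regExpansions_mono subset_rfl (le_of_eq ?_) (hiter i (k i) ih)
      simp only [List.map_cons, List.sum_cons]
      ring
  have hwdeg : wdeg s k = ((List.finRange (d+1)).map fun i => (k i : ℝ) * s i).sum := by
    rw [wdeg, Fin.sum_univ_def]
  rw [hwdeg]
  exact hfold _

lemma mem_of_mpderiv_dlist_ne_zero (hOp : ∀ o ∈ Op, 0 < regO regp s o)
    (hU : ∀ o ∈ U, regO regp s o < 0) {c : ℝ} {F : FnO Lp d}
    (hF : F ∈ regExpansions Op U regp s c) {k : MIdx d} {L : List (Odx Lp d)}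
    (hne : mpderiv k (Dlist L F) ≠ 0) : ∀ o ∈ L, o ∈ Op ∨ o ∈ U := by
  intro o ho
  by_contra! h
  obtain ⟨L₁, L₂, rfl⟩ := List.append_of_mem ho
  have hsplit : Dlist (L₁ ++ o :: L₂) F = Dlist L₁ (Dpart o (Dlist L₂ F)) :=
    List.foldr_append ..
  rw [hsplit, dpart_eq_zero_of_mem_regExpansions (dlist_mem_regExpansions hOp hU hF L₂) h.1 h.2,
    Dlist_zero, mpderiv_zero] at hne
  exact hne rfl

lemma le_of_mpderiv_dlist_ne_zero (hOp : ∀ o ∈ Op, 0 < regO regp s o)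
    (hcover : ∀ o, o ∈ Op ∨ regO regp s o < 0) (hs : ∀ i, 0 ≤ s i)
    (hU : ∀ o ∈ U, regO regp s o < 0) {c : ℝ} {F : FnO Lp d}
    (hF : F ∈ regExpansions Op U regp s c) {k : MIdx d} {L : List (Odx Lp d)}
    (hne : mpderiv k (Dlist L F) ≠ 0) :
    c ≤ wdeg s k + (L.map fun o => min (regO regp s o) 0).sum := by
  have hneg : ∀ o ∈ {o | regO regp s o < 0}, regO regp s o < 0 := fun _ h => h
  have hF' := regExpansions_mono (U' := {o | regO regp s o < 0}) hU le_rfl hF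
  have := le_zero_of_mem_regExpansions hneg
    (mpderiv_mem_regExpansions hOp hneg hcover hs (dlist_mem_regExpansions hOp hneg hF' L) k) hne
  linarith

end PowerCounting

lemma exists_pos_forall_le_of_finite {ι : Type*} [Finite ι] (f : ι → ℝ) (hf : ∀ i, 0 < f i) :
    ∃ ε > 0, ∀ i, ε ≤ f i := by
  cases isEmpty_or_nonempty ι
  · exact ⟨1, one_pos, isEmptyElim⟩
  · obtain ⟨i₀, hi₀⟩ := Finite.exists_min f
    exact ⟨f i₀, hf i₀, hi₀⟩

lemma finite_setOf_multiset_card_le {X : Type*} {T : Set X} (hT : T.Finite) (n : ℕ) :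
    {M : Multiset X | Multiset.card M ≤ n ∧ ∀ x ∈ M, x ∈ T}.Finite := by
  classical
  refine (Multiset.finite_toSet (n • hT.toFinset.val).powerset).subset fun M ⟨hcard, hM⟩ => ?_
  refine Multiset.mem_powerset.2 (Multiset.le_iff_count.2 fun x => ?_)
  by_cases hx : x ∈ M
  · rw [Multiset.count_nsmul, Multiset.count_eq_one_of_mem hT.toFinset.nodup
      (by simpa using hM x hx), mul_one]
    exact (Multiset.count_le_card x M).trans hcard
  · simp [Multiset.count_eq_zero_of_notMem hx]

lemma sum_map_toList {X : Type*} (M : Multiset X) (f : X → ℝ) :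
    (M.toList.map f).sum = (M.map f).sum := by
  rw [← Multiset.sum_coe, ← Multiset.map_coe, Multiset.coe_toList]

namespace TreeV

variable {Lp Dr : Type} {d : ℕ} (S : TreeV Lp Dr d)

lemma finite_of_forall_node_mem [Finite Dr] {E : Set (Odx Lp d)} (hE : E.Finite)
    {K : ℕ → Set (MIdx d)} (hK : ∀ n, (K n).Finite) {A : ℕ → Set S.V} (hA₀ : A 0 = ∅)
    (hA : ∀ n l k M, S.node l k M ∈ A (n+1) →
      k ∈ K n ∧ Multiset.card M ≤ n ∧ ∀ x ∈ M, x.1 ∈ E ∧ x.2 ∈ A n) (n : ℕ) :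
    (A n).Finite := by
  induction n with
  | zero => simp [hA₀]
  | succ n ih =>
    refine ((Set.finite_univ.prod ((hK n).prod (finite_setOf_multiset_card_le (hE.prod ih) n))
      ).image fun z : Dr × MIdx d × Multiset (Odx Lp d × S.V) => S.node z.1 z.2.1 z.2.2
      ).subset fun τ hτ => ?_
    obtain ⟨⟨l, k, M⟩, rfl⟩ := S.node_bij.2 τ
    obtain ⟨hk, hcard, hM⟩ := hA n l k M hτ
    exact ⟨(l, k, M), ⟨trivial, hk, hcard, fun x hx => hM x hx⟩, rfl⟩

variable [DecidableEq Lp] {F : Lp → Dr → FnO Lp d} {NV : Lp → S.V → Prop}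

lemma nv_node_iff (hNV : S.NVSpec F NV) (t : Lp) (l : Dr) (k : MIdx d)
    (M : Multiset (Odx Lp d × S.V)) :
    NV t (S.node l k M) ↔
      mpderiv k (Dlist (M.toList.map Prod.fst) (F t l)) ≠ 0 ∧ ∀ x ∈ M, NV x.1.1 x.2 := by
  conv_lhs => rw [← Multiset.coe_toList M, hNV]
  refine and_congr_right fun _ => ⟨fun h x hx => ?_, fun h j => h _ (Multiset.mem_toList.1
    (List.get_mem _ _))⟩
  obtain ⟨j, rfl⟩ := List.mem_iff_get.1 (Multiset.mem_toList.2 hx)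
  exact h j

end TreeV

section Subcritical

variable {Lp Lm : Type} {d : ℕ} {S : TreeV Lp (Option Lm) d}
  {F : Lp → Option Lm → FnO Lp d} {NV : Lp → S.V → Prop} {deg : S.V → ℝ}
  {regp degL : Lp → ℝ} {degLm : Lm → ℝ} {s : Fin (d+1) → ℝ} {ε : ℝ} {U : Finset (Odx Lp d)}

/-- `|𝓘_𝔱(τ)|_𝔰 - reg(𝔱)`. -/
noncomputable def excess {V : Type} (regp degL : Lp → ℝ) (deg : V → ℝ) (t : Lp) (τ : V) : ℝ :=
  deg τ - (regp t - degL t)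

lemma deg_node_eq (hdeg : S.DegSpec s degL degLm deg) (l : Option Lm) (k : MIdx d)
    (M : Multiset (Odx Lp d × S.V)) :
    deg (S.node l k M) = l.elim 0 degLm + wdeg s k +
      (M.map fun x => regO regp s x.1 + excess regp degL deg x.1.1 x.2).sum := by
  rw [hdeg]
  congr 2
  refine Multiset.map_congr rfl fun x _ => ?_
  simp only [regO, excess]
  ring

variable [DecidableEq Lp]

/-- The power-counting bound is stated with `|𝔩|_𝔰 ≥ reg(𝔩)` in place of `reg(𝔩)`: this weaker
form is all the tree argument needs. -/
def PowerCounting (F : Lp → Option Lm → FnO Lp d) (regp degL : Lp → ℝ) (degLm : Lm → ℝ)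
    (s : Fin (d+1) → ℝ) (ε : ℝ) (U : Finset (Odx Lp d)) : Prop :=
  ∀ t l k L, mpderiv k (Dlist L (F t l)) ≠ 0 →
    (∀ o ∈ L, 0 < regO regp s o ∨ o ∈ U) ∧
      regp t - degL t + ε ≤
        l.elim 0 degLm + wdeg s k + (L.map fun o => min (regO regp s o) 0).sum

lemma edge_mem_of_nv_node (hNV : S.NVSpec F NV) (hpc : PowerCounting F regp degL degLm s ε U)
    {t : Lp} {l : Option Lm} {k : MIdx d} {M : Multiset (Odx Lp d × S.V)}
    (ht : NV t (S.node l k M)) : ∀ x ∈ M, 0 < regO regp s x.1 ∨ x.1 ∈ U := fun x hx =>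
  (hpc t l k _ ((S.nv_node_iff hNV t l k M).1 ht).1).1 x.1
    (List.mem_map.2 ⟨x, Multiset.mem_toList.2 hx, rfl⟩)

lemma excess_node_ge (hNV : S.NVSpec F NV) (hdeg : S.DegSpec s degL degLm deg)
    (hpc : PowerCounting F regp degL degLm s ε U)
    {t : Lp} {l : Option Lm} {k : MIdx d} {M : Multiset (Odx Lp d × S.V)}
    (ht : NV t (S.node l k M)) :
    ε + (M.map fun x => max (regO regp s x.1) 0 + excess regp degL deg x.1.1 x.2).sum ≤
      excess regp degL deg t (S.node l k M) := by
  have hne := ((S.nv_node_iff hNV t l k M).1 ht).1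
  have h := (hpc t l k _ hne).2
  rw [List.map_map, sum_map_toList] at h
  have hsplit : (M.map fun x => regO regp s x.1 + excess regp degL deg x.1.1 x.2).sum =
      (M.map fun x => min (regO regp s x.1) 0).sum +
        (M.map fun x => max (regO regp s x.1) 0 + excess regp degL deg x.1.1 x.2).sum := by
    rw [← Multiset.sum_map_add]
    refine congrArg _ (Multiset.map_congr rfl fun x _ => ?_)
    linarith [min_add_max (regO regp s x.1) 0]
  rw [excess, deg_node_eq hdeg, hsplit]
  simp only [Function.comp_def] at h
  linarith

lemma le_excess_of_nv (hNV : S.NVSpec F NV) (hdeg : S.DegSpec s degL degLm deg)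
    (hpc : PowerCounting F regp degL degLm s ε U)
    (hε : 0 ≤ ε) (τ : S.V) : ∀ t, NV t τ → ε ≤ excess regp degL deg t τ := by
  induction τ using S.ind with
  | _ l k M ih =>
    intro t ht
    have hsum : 0 ≤ (M.map fun x => max (regO regp s x.1) 0 + excess regp degL deg x.1.1 x.2).sum :=
      Multiset.sum_nonneg fun _ hy => by
        obtain ⟨x, hx, rfl⟩ := Multiset.mem_map.1 hy
        have := ih x hx x.1.1 (((S.nv_node_iff hNV t l k M).1 ht).2 x hx)
        linarith [le_max_right (regO regp s x.1) 0]
    linarith [excess_node_ge hNV hdeg hpc ht]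

lemma card_le_and_excess_lt (hNV : S.NVSpec F NV) (hdeg : S.DegSpec s degL degLm deg)
    (hpc : PowerCounting F regp degL degLm s ε U)
    (hε : 0 < ε) {n : ℕ} {t : Lp} {l : Option Lm} {k : MIdx d}
    {M : Multiset (Odx Lp d × S.V)} (ht : NV t (S.node l k M))
    (hlt : excess regp degL deg t (S.node l k M) < ε * (n + 1)) :
    Multiset.card M ≤ n ∧ ∀ x ∈ M, excess regp degL deg x.1.1 x.2 < ε * n := by
  let f : Odx Lp d × S.V → ℝ := fun x => max (regO regp s x.1) 0 + excess regp degL deg x.1.1 x.2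
  have hf : ∀ x ∈ M, ε ≤ f x := fun x hx => by
    have := le_excess_of_nv hNV hdeg hpc hε.le x.2 x.1.1
      (((S.nv_node_iff hNV t l k M).1 ht).2 x hx)
    linarith [le_max_right (regO regp s x.1) 0]
  have hroot : ε + (M.map f).sum ≤ excess regp degL deg t (S.node l k M) :=
    excess_node_ge hNV hdeg hpc ht
  have hcard : Multiset.card M • ε ≤ (M.map f).sum :=
    Multiset.card_map f M ▸ Multiset.card_nsmul_le_sum fun _ hy => by
      obtain ⟨x, hx, rfl⟩ := Multiset.mem_map.1 hy
      exact hf x hx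
  rw [nsmul_eq_mul] at hcard
  refine ⟨?_, fun x hx => ?_⟩
  · have : (Multiset.card M : ℝ) + 1 < n + 1 := lt_of_mul_lt_mul_left (by linarith) hε.le
    exact (Nat.cast_lt.1 (by linarith : (Multiset.card M : ℝ) < n)).le
  · have hx' : f x ≤ (M.map f).sum := Multiset.single_le_sum (fun _ hy => by
      obtain ⟨y, hyM, rfl⟩ := Multiset.mem_map.1 hy
      linarith [hf y hyM]) _ (Multiset.mem_map_of_mem f hx)
    linarith [le_max_right (regO regp s x.1) 0]

lemma wdeg_le_of_nv_node (hNV : S.NVSpec F NV) (hdeg : S.DegSpec s degL degLm deg)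
    (hpc : PowerCounting F regp degL degLm s ε U) (hε : 0 ≤ ε) {C : ℝ} (hC₀ : 0 ≤ C)
    (hC : ∀ o ∈ U, -C ≤ regO regp s o) {t : Lp} {l : Option Lm} {k : MIdx d}
    {M : Multiset (Odx Lp d × S.V)} (ht : NV t (S.node l k M)) :
    wdeg s k ≤ excess regp degL deg t (S.node l k M) + (regp t - degL t) - l.elim 0 degLm +
      Multiset.card M * C := by
  have hsum : Multiset.card M • (-C) ≤
      (M.map fun x => regO regp s x.1 + excess regp degL deg x.1.1 x.2).sum :=
    Multiset.card_map _ M ▸ Multiset.card_nsmul_le_sum fun _ hy => by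
      obtain ⟨x, hx, rfl⟩ := Multiset.mem_map.1 hy
      have := le_excess_of_nv hNV hdeg hpc hε x.2 x.1.1
        (((S.nv_node_iff hNV t l k M).1 ht).2 x hx)
      rcases edge_mem_of_nv_node hNV hpc ht x hx with h | h
      · linarith
      · linarith [hC x.1 h]
  rw [nsmul_eq_mul] at hsum
  have := deg_node_eq (regp := regp) hdeg l k M
  rw [excess]
  linarith

lemma finite_setOf_nv_deg_lt [Finite Lp] [Finite Lm] (hNV : S.NVSpec F NV)
    (hdeg : S.DegSpec s degL degLm deg) (hpc : PowerCounting F regp degL degLm s ε U)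
    (hs : ∀ i, 1 ≤ s i) (hε : 0 < ε) (γ : ℝ) (t : Lp) :
    {τ : S.V | NV t τ ∧ deg τ < γ}.Finite := by
  obtain ⟨C₁, hC₁⟩ := (Set.finite_range fun t => regp t - degL t).bddAbove
  obtain ⟨C₂, hC₂⟩ := (Set.finite_range fun l : Option Lm => -l.elim 0 degLm).bddAbove
  obtain ⟨C₃, hC₃⟩ := (U.image fun o => -regO regp s o).bddAbove
  have hC : ∀ o ∈ U, -max C₃ 0 ≤ regO regp s o := fun o ho => by
    linarith [le_max_left C₃ 0, hC₃ (Finset.mem_image_of_mem (fun o => -regO regp s o) ho)]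
  let A : ℕ → Set S.V := fun n => {τ | ∃ t, NV t τ ∧ excess regp degL deg t τ < ε * n}
  have hA : ∀ n, (A n).Finite := by
    refine S.finite_of_forall_node_mem
      (U.finite_toSet.union (finite_setOf_regO_pos (regp := regp) hs))
      (K := fun n => {k | wdeg s k ≤ ε * (n + 1) + C₁ + C₂ + n * max C₃ 0})
      (fun n => finite_setOf_wdeg_le hs _) ?_ ?_
    · refine Set.eq_empty_of_forall_notMem fun τ ⟨t, ht, hlt⟩ => ?_
      have := le_excess_of_nv hNV hdeg hpc hε.le τ t ht
      simp only [CharP.cast_eq_zero, mul_zero] at hlt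
      linarith
    · rintro n l k M ⟨t, ht, hlt⟩
      push_cast at hlt
      obtain ⟨hcard, hchild⟩ := card_le_and_excess_lt hNV hdeg hpc hε ht hlt
      refine ⟨?_, hcard, fun x hx => ⟨(edge_mem_of_nv_node hNV hpc ht x hx).symm, x.1.1,
        ((S.nv_node_iff hNV t l k M).1 ht).2 x hx, hchild x hx⟩⟩
      have hcardC : (Multiset.card M : ℝ) * max C₃ 0 ≤ n * max C₃ 0 :=
        mul_le_mul_of_nonneg_right (by exact_mod_cast hcard) (le_max_right _ _)
      have := wdeg_le_of_nv_node hNV hdeg hpc hε.le (le_max_right C₃ 0) hC ht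
      have := hC₁ ⟨t, rfl⟩
      have := hC₂ ⟨l, rfl⟩
      simp only [Set.mem_ofPred_eq]
      linarith
  obtain ⟨n, hn⟩ := exists_nat_gt ((γ - (regp t - degL t)) / ε)
  refine (hA n).subset fun τ ⟨ht, hγ⟩ => ⟨t, ht, ?_⟩
  rw [div_lt_iff₀ hε] at hn
  rw [excess]
  linarith

end Subcritical

/-- `𝔇 = 𝔏₋ ⊔ {𝟎}` is encoded as `Option Lm`, with `none = 𝟎`. -/
theorem statement19_general
    {d : ℕ} {Lp Lm : Type} [Fintype Lp] [DecidableEq Lp] [Fintype Lm]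
    (Om Op : Set (Odx Lp d))
    (hcover : ∀ o, o ∈ Om ∨ o ∈ Op)
    (s : Fin (d+1) → ℝ) (hs : ∀ i, 1 ≤ s i)
    (degL : Lp → ℝ)
    (degLm : Lm → ℝ)
    (regp : Lp → ℝ) (regm : Lm → ℝ)
    (hOp : ∀ o : Odx Lp d, o ∈ Op ↔ 0 < regp o.1 - wdeg s o.2)
    (hOm : ∀ o : Odx Lp d, o ∈ Om ↔ regp o.1 - wdeg s o.2 < 0)
    (hregm : ∀ l, regm l < degLm l)
    (S : TreeV Lp (Option Lm) d)
    (F : Lp → Option Lm → FnO Lp d)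
    (hF : ∀ (t : Lp) (l : Option Lm),
      ∃ (m : ℕ) (α : Fin m → (Odx Lp d →₀ ℕ)) (G : Fin m → FnO Lp d),
        Function.Injective α ∧
        (∀ j, ∀ o ∈ (α j).support, o ∈ Om) ∧
        (∀ j, IsSmoothCO (G j)) ∧
        (∀ j, G j ≠ 0) ∧
        (∀ j, DependsOnlyOn (G j) Op) ∧
        (F t l = fun x => ∑ j, G j x * Xpow (α j) x) ∧
        ∀ j, regp t < degL t + l.elim 0 regm +
          (α j).sum fun o n => (n : ℝ) * (regp o.1 - wdeg s o.2))
    (NV : Lp → S.V → Prop) (hNV : S.NVSpec F NV)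
    (deg : S.V → ℝ) (hdeg : S.DegSpec s degL degLm deg) :
    ∀ (γ : ℝ) (t : Lp), {τ : S.V | NV t τ ∧ deg τ < γ}.Finite := by
  choose m α G _ hαOm hG _ hGOp hFG hsubcrit using hF
  obtain ⟨ε, hε, hgap⟩ := exists_pos_forall_le_of_finite
    (fun i : Σ tl : Lp × Option Lm, Fin (m tl.1 tl.2) =>
      degL i.1.1 + i.1.2.elim 0 regm + regExp regp s (α i.1.1 i.1.2 i.2) - regp i.1.1)
    fun i => sub_pos.2 (hsubcrit _ _ _)
  let U : Finset (Odx Lp d) :=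
    Finset.univ.biUnion fun i : Σ tl : Lp × Option Lm, Fin (m tl.1 tl.2) =>
      (α i.1.1 i.1.2 i.2).support
  have hαU : ∀ t l j, ↑(α t l j).support ⊆ (U : Set (Odx Lp d)) := fun t l j o ho =>
    Finset.mem_biUnion.2 ⟨⟨(t, l), j⟩, Finset.mem_univ _, ho⟩
  have hUneg : ∀ o ∈ U, regO regp s o < 0 := fun o ho => by
    obtain ⟨i, -, hi⟩ := Finset.mem_biUnion.1 ho
    exact (hOm o).1 (hαOm _ _ _ o hi)
  have hOp' : ∀ o ∈ Op, 0 < regO regp s o := fun o => (hOp o).1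
  have hcover' : ∀ o, o ∈ Op ∨ regO regp s o < 0 := fun o => ((hcover o).imp_left (hOm o).1).symm
  have hexp : ∀ t l, F t l ∈ regExpansions Op ↑U regp s (regp t - degL t - l.elim 0 regm + ε) :=
    fun t l => hFG t l ▸ sum_monomial_mem_regExpansions (hG t l) (hGOp t l) (hαU t l)
      fun j => by linarith [hgap ⟨(t, l), j⟩]
  refine finite_setOf_nv_deg_lt (regp := regp) (U := U) hNV hdeg
    (fun t l k L hne => ⟨?_, ?_⟩) hs hε
  · exact fun o ho => (mem_of_mpderiv_dlist_ne_zero hOp' hUneg (hexp t l) hne o ho).imp_left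
      (hOp o).1
  · have hreg : l.elim 0 regm ≤ l.elim 0 degLm := by
      cases l with
      | none => exact le_rfl
      | some l => exact (hregm l).le
    linarith [le_of_mpderiv_dlist_ne_zero hOp' hcover' (fun i => zero_le_one.trans (hs i)) hUneg
      (hexp t l) hne]

/-- subcriticality implies finiteness of low-degree non-vanishing trees:
if `F` obeys `reg`, then for every `γ ∈ ℝ` and `𝔱 ∈ 𝔏₊` the set of `𝔱`-non-vanishing trees
of `𝔰`-degree `< γ` is finite. Here `𝔇 = 𝔏₋ ⊔ {𝟎}` is encoded as `Option Lm`
with `none = 𝟎`. -/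
theorem statement19
    {d : ℕ} {Lp Lm : Type} [Fintype Lp] [DecidableEq Lp] [Fintype Lm]
    (Om Op : Set (Odx Lp d))
    (hdisj : ∀ o, ¬(o ∈ Om ∧ o ∈ Op)) (hcover : ∀ o, o ∈ Om ∨ o ∈ Op)
    (s : Fin (d+1) → ℝ) (hs : ∀ i, 1 ≤ s i)
    (degL : Lp → ℝ) (hdegL : ∀ t, 0 < degL t)
    (degLm : Lm → ℝ) (hdegLm : ∀ l, degLm l < 0)
    (regp : Lp → ℝ) (regm : Lm → ℝ)
    (hOp : ∀ o : Odx Lp d, o ∈ Op ↔ 0 < regp o.1 - wdeg s o.2)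
    (hOm : ∀ o : Odx Lp d, o ∈ Om ↔ regp o.1 - wdeg s o.2 < 0)
    (hregm : ∀ l, regm l < degLm l)
    (S : TreeV Lp (Option Lm) d)
    (F : Lp → Option Lm → FnO Lp d)
    (hF : ∀ (t : Lp) (l : Option Lm),
      ∃ (m : ℕ) (α : Fin m → (Odx Lp d →₀ ℕ)) (G : Fin m → FnO Lp d),
        Function.Injective α ∧
        (∀ j, ∀ o ∈ (α j).support, o ∈ Om) ∧
        (∀ j, IsSmoothCO (G j)) ∧
        (∀ j, G j ≠ 0) ∧
        (∀ j, DependsOnlyOn (G j) Op) ∧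
        (F t l = fun x => ∑ j, G j x * Xpow (α j) x) ∧
        ∀ j, regp t < degL t + l.elim 0 regm +
          (α j).sum fun o n => (n : ℝ) * (regp o.1 - wdeg s o.2))
    (NV : Lp → S.V → Prop) (hNV : S.NVSpec F NV)
    (deg : S.V → ℝ) (hdeg : S.DegSpec s degL degLm deg) :
    ∀ (γ : ℝ) (t : Lp), {τ : S.V | NV t τ ∧ deg τ < γ}.Finite :=
  statement19_general Om Op hcover s hs degL degLm regp regm hOp hOm hregm S F hF NV hNV deg hdeg

end SPDERenorm
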